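/- Let α ∈ (0,1), m > 0 and set K := 2·m^{1−1/α}. Let d, d_w > 0, d_J > 1, L > 1, and let c_3, c_4, c_6, C > 0 be constants. Then there exists a constant C' > 0 depending only on c_6, C, m, α such that the following holds: for every nonnegative integer M, every t with 0 < t ≤ L^{M d_w}, every r > 0, and all measurable functions η, G : (0,∞) → [0,∞) satisfying η(u) ≤ C·t·u^{−1−α} for all u > 0, G(s) ≤ c_3·f_{c_4}(s,r) for 0 < s < K·L^{M d_w}, and G(s) ≤ c_6·L^{−Md} for s ≥ K·L^{M d_w}, one has e^{mt}·∫_0^∞ G(s)·e^{−m^{1/α} s}·η(s) ds ≤ c_3·e^{mt}·∫_0^∞ f_{c_4}(s,r)·e^{−m^{1/α} s}·η(s) ds + C'·t·L^{−M d_w (1+α)}·e^{−m·L^{M d_w}}. -/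

import Mathlib

/-!
Split the subordination integral at `A = K L^{M d_w}`. Below `A` the hypothesis compares `G` with
`c₃ f_{c₄}`; the comparison integrand is integrable because `f_c(s,r)` decays faster than any power
of `s` as `s → 0`, while `η(s) ≲ t s^{-1-α}`. Above `A`, `G ≤ c₆ L^{-Md}` and `η(s) ≤ C t A^{-1-α}`,
so the tail is at most a constant times `t A^{-1-α} e^{-m^{1/α} A} / m^{1/α}`. The choice of `K`
makes `m^{1/α} A = 2 m L^{M d_w}`, and since `t ≤ L^{M d_w}` the prefactor `e^{mt}` absorbs only
half of this exponential.
-/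

open MeasureTheory Set

/-- The subgaussian profile `f_c(t,r) = t^{-d/d_w} exp(-c (r / t^{1/d_w})^{d_w/(d_J-1)})`. -/
noncomputable def fprof (d dw dJ c t r : ℝ) : ℝ :=
  t ^ (-(d / dw)) * Real.exp (-c * (r / t ^ (1 / dw)) ^ (dw / (dJ - 1)))

theorem rpow_mul_exp_neg_mul_le {q b x : ℝ} (hq : 0 < q) (hb : 0 < b) (hx : 0 ≤ x) :
    x ^ q * Real.exp (-(b * x)) ≤ (q / b) ^ q := by
  have hbx : 0 ≤ b * x / q := by positivity
  have hpow : (b * x / q) ^ q ≤ Real.exp (b * x) := by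
    calc (b * x / q) ^ q ≤ Real.exp (b * x / q) ^ q := by
          gcongr; linarith [Real.add_one_le_exp (b * x / q)]
      _ = Real.exp (b * x) := by rw [← Real.exp_mul]; field_simp
  have hsplit : x ^ q = (q / b) ^ q * (b * x / q) ^ q := by
    rw [← Real.mul_rpow (by positivity) hbx]; congr 1; field_simp
  rw [hsplit, Real.exp_neg, mul_assoc, ← div_eq_mul_inv]
  exact mul_le_of_le_one_right (by positivity) ((div_le_one (Real.exp_pos _)).2 hpow)

theorem fprof_eq_rpow_mul_exp {d dw dJ c s r : ℝ} (hdw : dw ≠ 0) (hr : 0 ≤ r) (hs : 0 < s) :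
    fprof d dw dJ c s r =
      s ^ (-(d / dw)) * Real.exp (-(c * r ^ (dw / (dJ - 1)) * s ^ (-(1 / (dJ - 1))))) := by
  rw [fprof, Real.div_rpow hr (by positivity), ← Real.rpow_mul hs.le,
    show 1 / dw * (dw / (dJ - 1)) = 1 / (dJ - 1) by field_simp,
    Real.rpow_neg hs.le (1 / (dJ - 1))]
  congr 2; ring

theorem fprof_nonneg (d dw dJ c : ℝ) {s : ℝ} (hs : 0 ≤ s) (r : ℝ) : 0 ≤ fprof d dw dJ c s r := by
  unfold fprof; positivity

theorem fprof_mul_rpow_neg_le {d dw dJ c r q : ℝ} (hdw : dw ≠ 0) (hdJ : 1 < dJ) (hc : 0 < c)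
    (hr : 0 < r) (hq : 0 < d / dw + q) :
    ∃ B, ∀ s, 0 < s → fprof d dw dJ c s r * s ^ (-q) ≤ B := by
  set γ := 1 / (dJ - 1)
  have hγ : 0 < γ := one_div_pos.2 (by linarith)
  set b := c * r ^ (dw / (dJ - 1))
  have hb : 0 < b := by positivity
  refine ⟨((d / dw + q) / γ / b) ^ ((d / dw + q) / γ), fun s hs => ?_⟩
  have hpow : s ^ (-(d / dw)) * s ^ (-q) = (s ^ (-γ)) ^ ((d / dw + q) / γ) := by
    rw [← Real.rpow_add hs, ← Real.rpow_mul hs.le]; congr 1; field_simp; ring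
  calc fprof d dw dJ c s r * s ^ (-q)
      = (s ^ (-γ)) ^ ((d / dw + q) / γ) * Real.exp (-(b * s ^ (-γ))) := by
        rw [fprof_eq_rpow_mul_exp hdw hr.le hs, ← hpow]; ring
    _ ≤ _ := rpow_mul_exp_neg_mul_le (by positivity) hb (by positivity)

theorem integrableOn_fprof_mul_exp_mul {d dw dJ c r q D μ : ℝ} {η : ℝ → ℝ} (hdw : dw ≠ 0)
    (hdJ : 1 < dJ) (hc : 0 < c) (hr : 0 < r) (hq : 0 < d / dw + q) (hμ : 0 < μ)
    (hη : Measurable η) (hη0 : ∀ u, 0 < u → 0 ≤ η u) (hηD : ∀ u, 0 < u → η u ≤ D * u ^ (-q)) :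
    IntegrableOn (fun s => fprof d dw dJ c s r * Real.exp (-μ * s) * η s) (Ioi 0) := by
  obtain ⟨B, hB⟩ := fprof_mul_rpow_neg_le hdw hdJ hc hr hq
  have hD : 0 ≤ D := by simpa using (hη0 1 one_pos).trans (hηD 1 one_pos)
  have hmeas : Measurable fun s => fprof d dw dJ c s r * Real.exp (-μ * s) * η s := by
    unfold fprof; fun_prop
  refine Integrable.mono' ((integrableOn_exp_mul_Ioi (neg_lt_zero.2 hμ) 0).const_mul (D * B))
    hmeas.aestronglyMeasurable ((ae_restrict_iff' measurableSet_Ioi).2 (ae_of_all _ ?_))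
  intro s (hs : 0 < s)
  have := fprof_nonneg d dw dJ c hs.le r
  rw [Real.norm_of_nonneg (by have := hη0 s hs; positivity)]
  calc fprof d dw dJ c s r * Real.exp (-μ * s) * η s
      ≤ fprof d dw dJ c s r * Real.exp (-μ * s) * (D * s ^ (-q)) := by
        gcongr; exact hηD s hs
    _ = D * (fprof d dw dJ c s r * s ^ (-q)) * Real.exp (-μ * s) := by ring
    _ ≤ D * B * Real.exp (-μ * s) := by gcongr; exact hB s hs

theorem setIntegral_Ioi_le_add_exp_tail {f g : ℝ → ℝ} {A a μ : ℝ} (hA : 0 < A) (hμ : 0 < μ)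
    (hf : IntegrableOn f (Ioi 0)) (hg0 : ∀ s, 0 < s → 0 ≤ g s)
    (hhead : ∀ s, 0 < s → s < A → g s ≤ f s) (hf0 : ∀ s, A ≤ s → 0 ≤ f s)
    (htail : ∀ s, A ≤ s → g s ≤ a * Real.exp (-μ * s)) :
    ∫ s in Ioi 0, g s ≤ (∫ s in Ioi 0, f s) + a * (Real.exp (-μ * A) / μ) := by
  set h := (Ici A).indicator fun s => a * Real.exp (-μ * s)
  have hexp : IntegrableOn (fun s => Real.exp (-μ * s)) (Ici A) :=
    (integrableOn_Ici_iff_integrableOn_Ioi).2 (integrableOn_exp_mul_Ioi (neg_lt_zero.2 hμ) A)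
  have hh : IntegrableOn h (Ioi 0) :=
    (IntegrableOn.integrable_indicator (hexp.const_mul a) measurableSet_Ici).integrableOn
  have hh_int : ∫ s in Ioi 0, h s = a * (Real.exp (-μ * A) / μ) := by
    rw [setIntegral_indicator measurableSet_Ici, inter_eq_right.2 (Ici_subset_Ioi.2 hA),
      integral_Ici_eq_integral_Ioi, integral_const_mul, integral_exp_mul_Ioi (neg_lt_zero.2 hμ),
      neg_div_neg_eq]
  have hgfh : ∀ s ∈ Ioi (0 : ℝ), g s ≤ f s + h s := by
    intro s (hs : 0 < s)
    rcases lt_or_ge s A with hsA | hAs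
    · simpa [h, hsA] using hhead s hs hsA
    · simpa [h, hAs] using (htail s hAs).trans (le_add_of_nonneg_left (hf0 s hAs))
  -- `integral_mono_of_nonneg` needs no integrability of `g`: otherwise `∫ g` is the junk value 0.
  calc ∫ s in Ioi 0, g s ≤ ∫ s in Ioi 0, (f s + h s) :=
        integral_mono_of_nonneg ((ae_restrict_iff' measurableSet_Ioi).2 (ae_of_all _ hg0))
          (hf.add hh) ((ae_restrict_iff' measurableSet_Ioi).2 (ae_of_all _ hgfh))
    _ = (∫ s in Ioi 0, f s) + a * (Real.exp (-μ * A) / μ) := by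
        rw [integral_add hf hh, hh_int]

theorem setIntegral_mul_exp_mul_le_add_tail {G f η : ℝ → ℝ} {A b c D μ q : ℝ} (hA : 0 < A)
    (hμ : 0 < μ) (hc : 0 ≤ c)
    (hf : IntegrableOn (fun s => f s * Real.exp (-μ * s) * η s) (Ioi 0))
    (hf0 : ∀ s, 0 < s → 0 ≤ f s) (hG0 : ∀ s, 0 < s → 0 ≤ G s)
    (hη0 : ∀ u, 0 < u → 0 ≤ η u)
    (hq : 0 ≤ q) (hηD : ∀ u, 0 < u → η u ≤ D * u ^ (-q))
    (hG_head : ∀ s, 0 < s → s < A → G s ≤ c * f s) (hG_tail : ∀ s, A ≤ s → G s ≤ b) :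
    ∫ s in Ioi 0, G s * Real.exp (-μ * s) * η s ≤
      c * (∫ s in Ioi 0, f s * Real.exp (-μ * s) * η s) +
        b * D * A ^ (-q) * (Real.exp (-μ * A) / μ) := by
  rw [← integral_const_mul]
  refine setIntegral_Ioi_le_add_exp_tail hA hμ (hf.const_mul c)
    (fun s hs => mul_nonneg (mul_nonneg (hG0 s hs) (Real.exp_nonneg _)) (hη0 s hs))
    (fun s hs hsA => ?_) (fun s hs => ?_) (fun s hs => ?_)
  · have := hη0 s hs
    calc G s * Real.exp (-μ * s) * η s ≤ c * f s * Real.exp (-μ * s) * η s := by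
          gcongr; exact hG_head s hs hsA
      _ = _ := by ring
  · have hs0 := hA.trans_le hs
    have := hf0 s hs0
    have := hη0 s hs0
    positivity
  · have hs0 := hA.trans_le hs
    have hηA : η s ≤ D * A ^ (-q) :=
      (hηD s hs0).trans (mul_le_mul_of_nonneg_left
        (Real.rpow_le_rpow_of_nonpos hA hs (by linarith))
        (by simpa using (hη0 1 one_pos).trans (hηD 1 one_pos)))
    have hb : 0 ≤ b := (hG0 s hs0).trans (hG_tail s hs)
    calc G s * Real.exp (-μ * s) * η s ≤ b * Real.exp (-μ * s) * (D * A ^ (-q)) :=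
          mul_le_mul (by gcongr; exact hG_tail s hs) hηA (hη0 s hs0) (by positivity)
      _ = _ := by ring

theorem exp_mul_tail_le {α m K d dw L c C t : ℝ} (M : ℕ) (hm : 0 < m)
    (hK : K = 2 * m ^ (1 - 1 / α)) (hd : 0 ≤ d) (hL : 1 ≤ L) (hc : 0 ≤ c) (hC : 0 ≤ C)
    (ht : 0 ≤ t) (htw : t ≤ L ^ ((M : ℝ) * dw)) :
    Real.exp (m * t) * (c * L ^ (-((M : ℝ) * d)) * (C * t) *
        (K * L ^ ((M : ℝ) * dw)) ^ (-(1 + α)) *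
        (Real.exp (-(m ^ (1 / α)) * (K * L ^ ((M : ℝ) * dw))) / m ^ (1 / α))) ≤
      c * C * K ^ (-(1 + α)) / m ^ (1 / α) * t * L ^ (-((M : ℝ) * dw * (1 + α))) *
        Real.exp (-(m * L ^ ((M : ℝ) * dw))) := by
  set w := L ^ ((M : ℝ) * dw)
  have hL0 : 0 < L := by linarith
  have hK0 : 0 < K := hK ▸ by positivity
  have hμK : m ^ (1 / α) * K = 2 * m := by
    rw [hK, mul_left_comm, ← Real.rpow_add hm, add_sub_cancel, Real.rpow_one]
  have hAq : (K * w) ^ (-(1 + α)) = K ^ (-(1 + α)) * L ^ (-((M : ℝ) * dw * (1 + α))) := by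
    rw [Real.mul_rpow hK0.le (by positivity), ← Real.rpow_mul hL0.le]; ring_nf
  have hexp :
      Real.exp (m * t) * Real.exp (-(m ^ (1 / α)) * (K * w)) ≤ Real.exp (-(m * w)) := by
    rw [← Real.exp_add, neg_mul, ← mul_assoc, hμK]
    gcongr
    nlinarith
  have hLd : L ^ (-((M : ℝ) * d)) ≤ 1 :=
    Real.rpow_le_one_of_one_le_of_nonpos hL (by simp only [neg_nonpos]; positivity)
  calc _ = c * C * K ^ (-(1 + α)) / m ^ (1 / α) * t * L ^ (-((M : ℝ) * dw * (1 + α))) *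
        (L ^ (-((M : ℝ) * d)) * (Real.exp (m * t) * Real.exp (-(m ^ (1 / α)) * (K * w)))) := by
        rw [hAq]; ring
    _ ≤ _ := by
        gcongr
        exact (mul_le_mul hLd hexp (by positivity) zero_le_one).trans_eq (one_mul _)

theorem stmt11_general (α m K d dw dJ L c3 c4 c6 C : ℝ)
    (hα0 : 0 < α) (hm : 0 < m)
    (hK : K = 2 * m ^ (1 - 1 / α))
    (hd : 0 < d) (hdw : 0 < dw) (hdJ : 1 < dJ) (hL : 1 < L)
    (hc3 : 0 < c3) (hc4 : 0 < c4) (hc6 : 0 < c6) (hC : 0 < C) :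
    ∃ C' : ℝ, 0 < C' ∧
      ∀ M : ℕ, ∀ t : ℝ, 0 < t → t ≤ L ^ ((M : ℝ) * dw) →
      ∀ r : ℝ, 0 < r →
      ∀ η G : ℝ → ℝ, Measurable η → Measurable G →
        (∀ u, 0 < u → 0 ≤ η u) → (∀ s, 0 < s → 0 ≤ G s) →
        (∀ u, 0 < u → η u ≤ C * t * u ^ (-1 - α)) →
        (∀ s, 0 < s → s < K * L ^ ((M : ℝ) * dw) → G s ≤ c3 * fprof d dw dJ c4 s r) →
        (∀ s, K * L ^ ((M : ℝ) * dw) ≤ s → G s ≤ c6 * L ^ (-((M : ℝ) * d))) →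
        Real.exp (m * t) *
            (∫ s in Ioi (0 : ℝ), G s * Real.exp (-(m ^ (1 / α)) * s) * η s) ≤
          c3 * (Real.exp (m * t) *
            (∫ s in Ioi (0 : ℝ),
              fprof d dw dJ c4 s r * Real.exp (-(m ^ (1 / α)) * s) * η s)) +
          C' * t * L ^ (-((M : ℝ) * dw * (1 + α))) *
            Real.exp (-(m * L ^ ((M : ℝ) * dw))) := by
  have hK0 : 0 < K := hK ▸ by positivity
  refine ⟨c6 * C * K ^ (-(1 + α)) / m ^ (1 / α), by positivity, ?_⟩
  intro M t ht htw r hr η G hη _ hη0 hG0 hηt hG_head hG_tail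
  have hηt' : ∀ u, 0 < u → η u ≤ C * t * u ^ (-(1 + α)) :=
    fun u hu => (hηt u hu).trans_eq (by rw [neg_add'])
  have hF := integrableOn_fprof_mul_exp_mul (d := d) hdw.ne' hdJ hc4 hr (by positivity)
    (by positivity : 0 < m ^ (1 / α)) hη hη0 hηt'
  have hsplit := setIntegral_mul_exp_mul_le_add_tail (by positivity) (by positivity) hc3.le hF
    (fun s hs => fprof_nonneg d dw dJ c4 hs.le r) hG0 hη0 (by positivity) hηt' hG_head hG_tail
  refine (mul_le_mul_of_nonneg_left hsplit (Real.exp_nonneg _)).trans ?_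
  rw [mul_add, mul_left_comm]
  exact add_le_add le_rfl (exp_mul_tail_le M hm hK hd.le hL.le hc6.le hC.le ht.le htw)

/-- decomposition step in the small-time case of Theorem 4.1.
With `K = 2 m^{1-1/α}`, the relativistic subordination of `G` is bounded by the
relativistic subordination of `c₃ f_{c₄}(·,r)` plus an exponentially small
tail term `C' t L^{-M d_w(1+α)} e^{-m L^{M d_w}}`. -/
theorem stmt11 (α m K d dw dJ L c3 c4 c6 C : ℝ)
    (hα0 : 0 < α) (hα1 : α < 1) (hm : 0 < m)
    (hK : K = 2 * m ^ (1 - 1 / α))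
    (hd : 0 < d) (hdw : 0 < dw) (hdJ : 1 < dJ) (hL : 1 < L)
    (hc3 : 0 < c3) (hc4 : 0 < c4) (hc6 : 0 < c6) (hC : 0 < C) :
    ∃ C' : ℝ, 0 < C' ∧
      ∀ M : ℕ, ∀ t : ℝ, 0 < t → t ≤ L ^ ((M : ℝ) * dw) →
      ∀ r : ℝ, 0 < r →
      ∀ η G : ℝ → ℝ, Measurable η → Measurable G →
        (∀ u, 0 < u → 0 ≤ η u) → (∀ s, 0 < s → 0 ≤ G s) →
        (∀ u, 0 < u → η u ≤ C * t * u ^ (-1 - α)) →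
        (∀ s, 0 < s → s < K * L ^ ((M : ℝ) * dw) → G s ≤ c3 * fprof d dw dJ c4 s r) →
        (∀ s, K * L ^ ((M : ℝ) * dw) ≤ s → G s ≤ c6 * L ^ (-((M : ℝ) * d))) →
        Real.exp (m * t) *
            (∫ s in Ioi (0 : ℝ), G s * Real.exp (-(m ^ (1 / α)) * s) * η s) ≤
          c3 * (Real.exp (m * t) *
            (∫ s in Ioi (0 : ℝ),
              fprof d dw dJ c4 s r * Real.exp (-(m ^ (1 / α)) * s) * η s)) +
          C' * t * L ^ (-((M : ℝ) * dw * (1 + α))) *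
            Real.exp (-(m * L ^ ((M : ℝ) * dw))) :=
  stmt11_general α m K d dw dJ L c3 c4 c6 C hα0 hm hK hd hdw hdJ hL hc3 hc4 hc6 hC
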